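/- Let k ≥ 1 and let g : S¹ → ℂ^k be the map g(z) = (z, z³, z⁵, …, z^{2k−1}) on the unit circle S¹ ⊆ ℂ (evaluation of the odd monomials of degree ≤ 2k−1). If w₀, …, w_{2k} are points of S¹ such that 0 lies in the convex hull (taken in ℂ^k regarded as a real vector space) of g(w₀), …, g(w_{2k}), then d(wᵢ, wⱼ) ≥ π − π/(2k+1) for some indices i ≠ j. -/

import Mathlib

/-!
Suppose all pairwise distances are `< π - π / (2k+1)`. It suffices to find `c` with
`Re (∑ⱼ cⱼ wᵢ ^ (2j+1)) > 0` for every `i`: the real linear functional `x ↦ Re (c ⬝ᵥ x)` then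
separates `0` from the convex hull.

Write `wᵢ = εᵢ e^{i aᵢ}` with `εᵢ = ±1` and `aᵢ ∈ (-π/2, π/2]`. Points of opposite signs have
`a`-values more than `π / (2k+1)` apart, while points of equal sign have `a`-values less than
`π - π / (2k+1)` apart. Cutting the sorted `a`-values between consecutive points of opposite
signs, and adding one cut beyond all of them if the number of cuts is even, gives an odd number
`m < 2k` of angles `α` for which `εᵢ ∏_α sin (aᵢ - α)` has constant sign. Since
`sin (θ - α) = Im (e^{iθ} e^{-iα})` and `Im (z u) = z⁻¹ (u z² - ū) / (2i)` on the unit circle,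
the function `z ↦ ∏_α Im (z e^{-iα})` is `z⁻¹ ^ m P (z²)` with `deg P ≤ m`; being real, it is
the real part of a polynomial in the odd powers `z, z³, …, z^m`.
-/

open Complex ComplexConjugate Finset Polynomial Real

/-- The arc-length metric on the unit circle in `ℂ`: for unit complex numbers `z, w`
we have `circleDist z (exp (θ * I) * z) = |θ|` whenever `|θ| ≤ π`. -/
noncomputable def circleDist (z w : ℂ) : ℝ := |Complex.arg (w / z)|

noncomputable def oddMonomials (k : ℕ) (z : ℂ) : Fin k → ℂ := fun j => z ^ (2 * (j : ℕ) + 1)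

noncomputable def oddTrigPoly (k : ℕ) : Submodule ℝ (ℂ → ℝ) where
  carrier := {f | ∃ c : Fin k → ℂ, ∀ z : ℂ, ‖z‖ = 1 → f z = (c ⬝ᵥ oddMonomials k z).re}
  add_mem' := by
    rintro f g ⟨c, hc⟩ ⟨d, hd⟩
    exact ⟨c + d, fun z hz => by simp [hc z hz, hd z hz, add_dotProduct]⟩
  zero_mem' := ⟨0, by simp⟩
  smul_mem' := by
    rintro r f ⟨c, hc⟩
    exact ⟨r • c, fun z hz => by simp [hc z hz, smul_dotProduct]⟩

lemma Complex.im_mul_eq_of_norm_eq_one {z : ℂ} (hz : ‖z‖ = 1) (u : ℂ) :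
    ((z * u).im : ℂ) = z⁻¹ * (u / (2 * I) * z ^ 2 - conj u / (2 * I)) := by
  have hz0 : z ≠ 0 := by rintro rfl; simp at hz
  rw [im_eq_sub_conj, map_mul, ← inv_eq_conj hz]
  field_simp

namespace oddTrigPoly

variable {k : ℕ}

lemma mem_of_eqOn_circle {f g : ℂ → ℝ} (hf : f ∈ oddTrigPoly k)
    (hfg : ∀ z : ℂ, ‖z‖ = 1 → g z = f z) : g ∈ oddTrigPoly k := by
  obtain ⟨c, hc⟩ := hf
  exact ⟨c, fun z hz => (hfg z hz).trans (hc z hz)⟩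

lemma re_mul_pow_mem (q : ℂ) {j : ℕ} (hj : j < k) :
    (fun z => (q * z ^ (2 * j + 1)).re) ∈ oddTrigPoly k :=
  ⟨Pi.single ⟨j, hj⟩ q, fun z _ => by simp [single_dotProduct, oddMonomials]⟩

lemma re_mul_zpow_mem (q : ℂ) {n : ℤ} (hn : Odd n) (hnk : |n| < 2 * k) :
    (fun z => (q * z ^ n).re) ∈ oddTrigPoly k := by
  obtain ⟨j, rfl | rfl⟩ : ∃ j : ℕ, n = 2 * j + 1 ∨ n = -(2 * j + 1) := by
    obtain ⟨m, rfl⟩ := hn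
    rcases le_or_gt 0 m with hm | hm
    · exact ⟨m.toNat, Or.inl (by omega)⟩
    · exact ⟨(-m - 1).toNat, Or.inr (by omega)⟩
  all_goals have := abs_lt.mp hnk
  · refine mem_of_eqOn_circle (re_mul_pow_mem q (j := j) (by omega)) fun z _ => ?_
    norm_cast
  · refine mem_of_eqOn_circle (re_mul_pow_mem (conj q) (j := j) (by omega)) fun z hz => ?_
    rw [← Complex.conj_re, map_mul, zpow_neg, ← inv_zpow, inv_eq_conj hz, map_zpow₀, conj_conj]
    norm_cast

lemma inv_pow_mul_eval_sq_re_mem {m : ℕ} (hm : Odd m) (hmk : m < 2 * k) {P : ℂ[X]}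
    (hP : P.natDegree ≤ m) : (fun z => (z⁻¹ ^ m * P.eval (z ^ 2)).re) ∈ oddTrigPoly k := by
  refine mem_of_eqOn_circle (Submodule.sum_mem _ (t := range (m + 1)) fun l hl =>
    re_mul_zpow_mem (P.coeff l) (n := 2 * l - m) ?_ ?_) fun z hz => ?_
  · exact (even_two_mul _).sub_odd (by exact_mod_cast hm)
  · have := Finset.mem_range.mp hl
    rw [abs_lt]; constructor <;> omega
  · have hz0 : z ≠ 0 := by rintro rfl; simp at hz
    rw [Finset.sum_apply, ← re_sum, eval_eq_sum_range' (Nat.lt_succ_of_le hP), mul_sum]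
    congr 1
    refine Finset.sum_congr rfl fun l _ => ?_
    rw [zpow_sub₀ hz0, show 2 * (l : ℤ) = (2 * l : ℕ) by push_cast; rfl, zpow_natCast,
      zpow_natCast, pow_mul]
    ring

lemma prod_im_mul_mem {ι : Type*} (s : Finset ι) (u : ι → ℂ) (hs : Odd #s) (hsk : #s < 2 * k) :
    (fun z => ∏ r ∈ s, (z * u r).im) ∈ oddTrigPoly k := by
  refine mem_of_eqOn_circle (inv_pow_mul_eval_sq_re_mem hs hsk
    (P := ∏ r ∈ s, (C (u r / (2 * I)) * X - C (conj (u r) / (2 * I)))) ?_) fun z hz => ?_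
  · refine (natDegree_prod_le _ _).trans ?_
    refine (Finset.sum_le_sum fun r _ => ?_).trans_eq (Finset.card_eq_sum_ones s).symm
    compute_degree
  · have key : ((∏ r ∈ s, (z * u r).im : ℝ) : ℂ) =
        z⁻¹ ^ #s * ∏ r ∈ s, (u r / (2 * I) * z ^ 2 - conj (u r) / (2 * I)) := by
      rw [ofReal_prod, Finset.prod_congr rfl fun r _ => im_mul_eq_of_norm_eq_one hz (u r),
        prod_mul_distrib, prod_const]
    simp only [eval_prod, eval_sub, eval_mul, eval_C, eval_X, ← key, ofReal_re]

end oddTrigPoly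

lemma card_filter_lt_insert {A : Finset ℝ} {x m : ℝ} (hxm : x < m) (hm : m ∉ A) :
    #{α ∈ insert m A | x < α} = #{α ∈ A | x < α} + 1 := by
  rw [filter_insert, if_pos hxm, card_insert_of_notMem fun h => hm (mem_filter.1 h).1]

/-- Cuts `A` below the top point `t` of `s` after which the signs `ε j` become the constant `ε t`:
every cut above `p j` flips the sign of `j`, and is paid for by a gap of size `δ` in `[p j, p t]`. -/
structure IsSignCutSet {ι : Type*} (p ε : ι → ℝ) (δ : ℝ) (s : Finset ι) (t : ι) (A : Finset ℝ) :
    Prop where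
  top_mem : t ∈ s
  le_top : ∀ j ∈ s, p j ≤ p t
  lt_top : ∀ α ∈ A, α < p t
  exists_lt : ∀ α ∈ A, ∃ i ∈ s, p i < α
  notMem : ∀ j ∈ s, p j ∉ A
  sign_eq : ∀ j ∈ s, ε j * (-1) ^ #{α ∈ A | p j < α} = ε t
  card_mul_le : ∀ j ∈ s, #{α ∈ A | p j < α} * δ ≤ p t - p j

namespace IsSignCutSet

variable {ι : Type*} {p ε : ι → ℝ} {δ : ℝ} {s : Finset ι} {t a : ι}
  {A : Finset ℝ}

lemma singleton (a : ι) : IsSignCutSet p ε δ {a} a ∅ where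
  top_mem := mem_singleton_self a
  le_top := by simp
  lt_top := by simp
  exists_lt := by simp
  notMem := by simp
  sign_eq := by simp
  card_mul_le := by simp

lemma filter_eq_empty (h : IsSignCutSet p ε δ s t A) (hta : p t ≤ p a) :
    {α ∈ A | p a < α} = ∅ :=
  filter_eq_empty_iff.2 fun α hα => not_lt.2 ((h.lt_top α hα).le.trans hta)

lemma filter_eq_self (h : IsSignCutSet p ε δ s t A) {lo : ι} (hlo : ∀ j ∈ s, p lo ≤ p j) :
    {α ∈ A | p lo < α} = A :=
  filter_true_of_mem fun α hα => by
    obtain ⟨i, hi, hiα⟩ := h.exists_lt α hα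
    exact (hlo i hi).trans_lt hiα

lemma abs_sub_lt {r : ℝ} (h : IsSignCutSet p ε δ s t A) (hdiam : ∀ i ∈ s, ∀ j ∈ s, p j - p i < r)
    {j : ι} (hj : j ∈ s) {α : ℝ} (hα : α ∈ A) : |p j - α| < r := by
  obtain ⟨i, hi, hiα⟩ := h.exists_lt α hα
  rw [abs_sub_lt_iff]
  constructor
  · linarith [hdiam i hi j hj]
  · linarith [hdiam j hj t h.top_mem, h.lt_top α hα]

lemma insert_of_sign_eq [DecidableEq ι] (h : IsSignCutSet p ε δ s t A)
    (hmax : ∀ x ∈ s, p x ≤ p a) (hεa : ε a = ε t) : IsSignCutSet p ε δ (insert a s) a A where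
  top_mem := mem_insert_self a s
  le_top := forall_mem_insert _ _ _ |>.2 ⟨le_rfl, hmax⟩
  lt_top α hα := (h.lt_top α hα).trans_le (hmax t h.top_mem)
  exists_lt α hα := by
    obtain ⟨i, hi, hiα⟩ := h.exists_lt α hα
    exact ⟨i, mem_insert_of_mem hi, hiα⟩
  notMem := forall_mem_insert _ _ _ |>.2
    ⟨fun hα => (h.lt_top _ hα).not_ge (hmax t h.top_mem), h.notMem⟩
  sign_eq := forall_mem_insert _ _ _ |>.2
    ⟨by simp [h.filter_eq_empty (hmax t h.top_mem)], fun j hj => (h.sign_eq j hj).trans hεa.symm⟩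
  card_mul_le := forall_mem_insert _ _ _ |>.2
    ⟨by simp [h.filter_eq_empty (hmax t h.top_mem)],
      fun j hj => (h.card_mul_le j hj).trans (by linarith [hmax t h.top_mem])⟩

lemma insert_of_sign_eq_neg [DecidableEq ι] (h : IsSignCutSet p ε δ s t A) (hδ : 0 ≤ δ)
    (hmax : ∀ x ∈ s, p x ≤ p a) (hgap : δ < p a - p t) (hεa : ε a = -ε t) :
    IsSignCutSet p ε δ (insert a s) a (insert ((p t + p a) / 2) A) := by
  set m := (p t + p a) / 2 with hm
  have htm : p t < m := by linarith
  have hma : m < p a := by linarith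
  have hmA : m ∉ A := fun hm => (h.lt_top m hm).not_gt htm
  have hjm : ∀ j ∈ s, p j < m := fun j hj => (h.le_top j hj).trans_lt htm
  have hAa := h.filter_eq_empty (hmax t h.top_mem)
  refine
    { top_mem := mem_insert_self a s
      le_top := forall_mem_insert _ _ _ |>.2 ⟨le_rfl, hmax⟩
      lt_top := forall_mem_insert _ _ _ |>.2
        ⟨hma, fun α hα => (h.lt_top α hα).trans_le (hmax t h.top_mem)⟩
      exists_lt := forall_mem_insert _ _ _ |>.2 ⟨⟨t, mem_insert_of_mem h.top_mem, htm⟩, ?_⟩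
      notMem := forall_mem_insert _ _ _ |>.2 ⟨?_, fun j hj hjA => ?_⟩
      sign_eq := forall_mem_insert _ _ _ |>.2 ⟨by simp [filter_insert, hma.not_gt, hAa], ?_⟩
      card_mul_le := forall_mem_insert _ _ _ |>.2 ⟨by simp [filter_insert, hma.not_gt, hAa], ?_⟩ }
  · intro α hα
    obtain ⟨i, hi, hiα⟩ := h.exists_lt α hα
    exact ⟨i, mem_insert_of_mem hi, hiα⟩
  · exact fun hα => (mem_insert.1 hα).elim hma.ne' fun hα =>
      (h.lt_top _ hα).not_ge (hmax t h.top_mem)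
  · exact (mem_insert.1 hjA).elim (hjm j hj).ne (h.notMem j hj)
  · intro j hj
    rw [card_filter_lt_insert (hjm j hj) hmA, pow_succ, ← mul_assoc, h.sign_eq j hj, hεa]
    ring
  · intro j hj
    rw [card_filter_lt_insert (hjm j hj) hmA]
    push_cast
    linarith [h.card_mul_le j hj]

end IsSignCutSet

theorem exists_isSignCutSet {ι : Type*} [DecidableEq ι] (p ε : ι → ℝ) {δ : ℝ} (hδ : 0 ≤ δ)
    (s : Finset ι) (hs : s.Nonempty) (hε : ∀ i ∈ s, ε i = 1 ∨ ε i = -1)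
    (hgap : ∀ i ∈ s, ∀ j ∈ s, p i ≤ p j → ε i ≠ ε j → δ < p j - p i) :
    ∃ t A, IsSignCutSet p ε δ s t A := by
  induction s using Finset.induction_on_max_value p with
  | empty => simp at hs
  | insert a s _ hmax ih =>
    rcases s.eq_empty_or_nonempty with rfl | hs'
    · exact ⟨a, ∅, IsSignCutSet.singleton a⟩
    obtain ⟨t, A, h⟩ := ih hs' (fun i hi => hε i (mem_insert_of_mem hi))
      fun i hi j hj => hgap i (mem_insert_of_mem hi) j (mem_insert_of_mem hj)
    by_cases hεa : ε a = ε t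
    · exact ⟨a, A, h.insert_of_sign_eq hmax hεa⟩
    · have hεa' : ε a = -ε t := by
        rcases hε a (mem_insert_self _ _) with h₁ | h₁ <;>
          rcases hε t (mem_insert_of_mem h.top_mem) with h₂ | h₂ <;> simp_all
      exact ⟨a, _, h.insert_of_sign_eq_neg hδ hmax (hgap t (mem_insert_of_mem h.top_mem) a
        (mem_insert_self _ _) (hmax t h.top_mem) (Ne.symm hεa)) hεa'⟩

lemma prod_sin_sub_pos (x : ℝ) (A : Finset ℝ) (hA : ∀ α ∈ A, x ≠ α ∧ |x - α| < π) :
    0 < (-1) ^ #{α ∈ A | x < α} * ∏ α ∈ A, Real.sin (x - α) := by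
  rw [← prod_filter_mul_prod_filter_not A (x < ·), ← mul_assoc, ← prod_const, ← prod_mul_distrib]
  refine mul_pos (prod_pos fun α hα => ?_) (prod_pos fun α hα => ?_)
  · obtain ⟨hα, hxα⟩ := mem_filter.1 hα
    linarith [Real.sin_neg_of_neg_of_neg_pi_lt (by linarith) (abs_lt.1 (hA α hα).2).1]
  · obtain ⟨hα, hxα⟩ := mem_filter.1 hα
    have hαx : α < x := lt_of_le_of_ne (not_lt.1 hxα) (hA α hα).1.symm
    exact Real.sin_pos_of_pos_of_lt_pi (by linarith) (abs_lt.1 (hA α hα).2).2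

theorem exists_odd_sign_cuts {ι : Type*} [Fintype ι] [Nonempty ι] {k : ℕ} (a ε : ι → ℝ)
    (hdiam : ∀ i j, a j - a i < π) (hε : ∀ i, ε i = 1 ∨ ε i = -1)
    (hdiff : ∀ i j, a i ≤ a j → ε i ≠ ε j → π / (2 * k + 1) < a j - a i)
    (hsame : ∀ i j, a i ≤ a j → ε i = ε j → a j - a i < π - π / (2 * k + 1)) :
    ∃ B : Finset ℝ, Odd #B ∧ #B < 2 * k ∧ ∃ η : ℝ, ∀ j,
      (∀ α ∈ B, a j ≠ α ∧ |a j - α| < π) ∧ ε j * (-1) ^ #{α ∈ B | a j < α} = η := by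
  classical
  set δ := π / (2 * k + 1) with hδ
  have hδpos : 0 < δ := by positivity
  have hπ : π = (2 * k + 1) * δ := by rw [hδ]; field_simp
  obtain ⟨t, A, hA⟩ := exists_isSignCutSet a ε hδpos.le univ univ_nonempty (fun i _ => hε i)
    fun i _ j _ => hdiff i j
  obtain ⟨lo, -, hlo⟩ := exists_min_image univ a univ_nonempty
  have hsign_lo := hA.sign_eq lo (mem_univ _)
  have hcount := hA.card_mul_le lo (mem_univ _)
  rw [hA.filter_eq_self hlo] at hsign_lo hcount
  have hAsin : ∀ j, ∀ α ∈ A, a j ≠ α ∧ |a j - α| < π := fun j α hα =>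
    ⟨fun h => hA.notMem j (mem_univ _) (h ▸ hα),
      hA.abs_sub_lt (fun i _ j _ => hdiam i j) (mem_univ j) hα⟩
  rcases Nat.even_or_odd #A with hev | hodd
  · have hεlo : ε lo = ε t := by simpa [hev.neg_one_pow] using hsign_lo
    have hlt : (#A : ℝ) < 2 * k :=
      lt_of_mul_lt_mul_right (by linarith [hsame lo t (hlo t (mem_univ _)) hεlo]) hδpos.le
    set β := (a t + a lo + π) / 2 with hβ
    have hβ_top : ∀ j, a j < β := fun j => by linarith [hA.le_top j (mem_univ _), hdiam lo t]
    have hβA : β ∉ A := fun h => (hA.lt_top β h).not_gt (hβ_top t)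
    refine ⟨insert β A, ?_, ?_, -ε t, fun j => ⟨?_, ?_⟩⟩
    · rw [card_insert_of_notMem hβA]; exact hev.add_one
    · rw [card_insert_of_notMem hβA]
      have := Nat.even_iff.1 hev
      have : #A < 2 * k := by exact_mod_cast hlt
      omega
    · refine forall_mem_insert _ _ _ |>.2 ⟨⟨(hβ_top j).ne, ?_⟩, hAsin j⟩
      rw [abs_sub_lt_iff]
      constructor <;> linarith [hβ_top j, hlo j (mem_univ _), hdiam j t]
    · rw [card_filter_lt_insert (hβ_top j) hβA, pow_succ, ← mul_assoc, hA.sign_eq j (mem_univ _)]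
      ring
  · refine ⟨A, hodd, ?_, ε t, fun j => ⟨hAsin j, hA.sign_eq j (mem_univ _)⟩⟩
    have hlt : (#A : ℝ) < 2 * k + 1 :=
      lt_of_mul_lt_mul_right (by linarith [hdiam lo t]) hδpos.le
    have := Nat.odd_iff.1 hodd
    have : #A < 2 * k + 1 := by exact_mod_cast hlt
    omega

lemma exists_sign_mul_exp {w : ℂ} (hw : ‖w‖ = 1) :
    ∃ ε a : ℝ, (ε = 1 ∨ ε = -1) ∧ a ∈ Set.Ioc (-(π / 2)) (π / 2) ∧ w = ε * exp (a * I) := by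
  obtain ⟨h1, h2⟩ := arg_mem_Ioc w
  set θ := arg w
  have hwθ : w = exp (θ * I) := by simpa [hw] using (norm_mul_exp_arg_mul_I w).symm
  by_cases hlo : θ ≤ -(π / 2)
  · refine ⟨-1, θ + π, Or.inr rfl, ⟨by linarith, by linarith⟩, ?_⟩
    rw [hwθ, ofReal_add, add_mul, exp_add_pi_mul_I]; simp
  by_cases hhi : π / 2 < θ
  · refine ⟨-1, θ - π, Or.inr rfl, ⟨by linarith, by linarith⟩, ?_⟩
    rw [hwθ, ofReal_sub, sub_mul, exp_sub_pi_mul_I]; simp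
  · exact ⟨1, θ, Or.inl rfl, ⟨by linarith, by linarith⟩, by simpa using hwθ⟩

lemma arg_exp_mul_I_of_mem_Ioc {x : ℝ} (hx : x ∈ Set.Ioc (-π) π) : arg (exp (x * I)) = x := by
  rw [arg_exp_mul_I, toIocMod_eq_self]
  exact ⟨hx.1, by linarith [hx.2]⟩

lemma abs_arg_neg_exp_mul_I {x : ℝ} (hx : |x| < π) : |arg (-exp (x * I))| = π - |x| := by
  obtain ⟨h1, h2⟩ := abs_lt.1 hx
  rcases le_or_gt x 0 with h | h
  · rw [← exp_add_pi_mul_I, ← add_mul, ← ofReal_add,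
      arg_exp_mul_I_of_mem_Ioc ⟨by linarith, by linarith⟩, abs_of_nonneg (by linarith),
      abs_of_nonpos h]
    ring
  · rw [← exp_sub_pi_mul_I, ← sub_mul, ← ofReal_sub,
      arg_exp_mul_I_of_mem_Ioc ⟨by linarith, by linarith⟩, abs_of_nonpos (by linarith),
      abs_of_pos h]
    ring

lemma circleDist_sign_mul_exp {ε ε' a a' : ℝ} (hε : ε = 1 ∨ ε = -1) (hε' : ε' = 1 ∨ ε' = -1)
    (h : |a' - a| < π) : circleDist (ε * exp (a * I)) (ε' * exp (a' * I)) =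
      if ε = ε' then |a' - a| else π - |a' - a| := by
  have hq : exp (a' * I) / exp (a * I) = exp ((a' - a : ℝ) * I) := by
    rw [← Complex.exp_sub, ofReal_sub, sub_mul]
  have hsame : |arg (exp ((a' - a : ℝ) * I))| = |a' - a| := by
    rw [arg_exp_mul_I_of_mem_Ioc ⟨(abs_lt.1 h).1, (abs_lt.1 h).2.le⟩]
  unfold circleDist
  rcases hε with rfl | rfl <;> rcases hε' with rfl | rfl <;> norm_num <;>
    simp only [neg_div, div_neg, hq, hsame, abs_arg_neg_exp_mul_I h]

lemma pos_mul_prod_sign_mul_sin {ε η x : ℝ} {B : Finset ℝ} (hε : ε = 1 ∨ ε = -1) (hB : Odd #B)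
    (hcut : ∀ α ∈ B, x ≠ α ∧ |x - α| < π) (hη : ε * (-1) ^ #{α ∈ B | x < α} = η) :
    0 < η * ∏ α ∈ B, ε * Real.sin (x - α) := by
  have h := prod_sin_sub_pos x B hcut
  rw [prod_mul_distrib, prod_const, ← hη]
  rcases hε with rfl | rfl
  · simpa using h
  · rw [hB.neg_one_pow]
    convert h using 1
    ring

lemma im_sign_mul_exp_mul_exp_neg (ε a α : ℝ) :
    (ε * exp (a * I) * exp (-α * I)).im = ε * Real.sin (a - α) := by
  rw [mul_assoc, ← Complex.exp_add, ← add_mul, ← ofReal_neg, ← ofReal_add, im_ofReal_mul,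
    exp_ofReal_mul_I_im, ← sub_eq_add_neg]

theorem exists_mem_oddTrigPoly_pos {ι : Type*} [Fintype ι] {k : ℕ} (hk : 1 ≤ k) (w : ι → ℂ)
    (hw : ∀ i, ‖w i‖ = 1)
    (hd : ∀ i j, i ≠ j → circleDist (w i) (w j) < π - π / (2 * k + 1)) :
    ∃ f ∈ oddTrigPoly k, ∀ i, 0 < f (w i) := by
  rcases isEmpty_or_nonempty ι with hι | hι
  · exact ⟨0, zero_mem _, fun i => isEmptyElim i⟩
  choose ε a hε ha hwa using fun i => exists_sign_mul_exp (hw i)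
  have hdiam : ∀ i j, a j - a i < π := fun i j => by linarith [(ha i).1, (ha j).2]
  have hdist : ∀ i j, a i ≤ a j → circleDist (w i) (w j) =
      if ε i = ε j then a j - a i else π - (a j - a i) := fun i j hij => by
    rw [hwa i, hwa j, circleDist_sign_mul_exp (hε i) (hε j)
      (abs_sub_lt_iff.2 ⟨hdiam i j, hdiam j i⟩), abs_of_nonneg (sub_nonneg.2 hij)]
  obtain ⟨B, hBodd, hBk, η, hB⟩ := exists_odd_sign_cuts a ε hdiam hε
    (fun i j hij hεij => by
      have := hd i j fun h => hεij (congrArg ε h)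
      rw [hdist i j hij, if_neg hεij] at this
      exact (sub_lt_sub_iff_left π).1 this)
    (fun i j hij hεij => by
      rcases eq_or_ne i j with rfl | hne
      · rw [sub_self, sub_pos]
        exact div_lt_self pi_pos (by norm_cast; omega)
      · simpa [hdist i j hij, hεij] using hd i j hne)
  refine ⟨η • fun z => ∏ α ∈ B, (z * exp (-α * I)).im,
    Submodule.smul_mem _ η (oddTrigPoly.prod_im_mul_mem B _ hBodd hBk), fun j => ?_⟩
  simpa only [Pi.smul_apply, smul_eq_mul, hwa j, im_sign_mul_exp_mul_exp_neg] using
    pos_mul_prod_sign_mul_sin (hε j) hBodd (hB j).1 (hB j).2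

lemma zero_notMem_convexHull_range_of_pos {E ι : Type*} [AddCommGroup E] [Module ℝ E] {v : ι → E}
    (f : E →ₗ[ℝ] ℝ) (hf : ∀ i, 0 < f (v i)) : (0 : E) ∉ convexHull ℝ (Set.range v) := fun h => by
  simpa using convexHull_min (Set.range_subset_iff.2 hf : Set.range v ⊆ {x | 0 < f x})
    (convex_halfSpace_gt f.isLinear 0) h

theorem stmt3 (k : ℕ) (hk : 1 ≤ k)
    (w : Fin (2 * k + 1) → ℂ) (hw : ∀ i, ‖w i‖ = 1)
    (h0 : (0 : Fin k → ℂ) ∈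
      convexHull ℝ (Set.range fun i : Fin (2 * k + 1) =>
        (fun j : Fin k => (w i) ^ (2 * (j : ℕ) + 1) : Fin k → ℂ))) :
    ∃ i j, i ≠ j ∧ Real.pi - Real.pi / (2 * k + 1) ≤ circleDist (w i) (w j) := by
  by_contra! hfar
  obtain ⟨f, ⟨c, hc⟩, hf⟩ := exists_mem_oddTrigPoly_pos hk w hw hfar
  exact zero_notMem_convexHull_range_of_pos (Complex.reLm.comp (dotProductBilin ℂ ℝ c))
    (fun i => (hf i).trans_eq (hc _ (hw i))) h0
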